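/- Let b : ℝ → ℝ be continuous and K : ℝ × ℝ → ℝ be jointly continuous. For y in an interval around x, let F_y(z) := b(z) + K(z,y), and suppose: (i) for each y there is a leftmost maximizer m(y) of F_y over ℝ; (ii) y ↦ m(y) is nondecreasing; (iii) all maximizers for y ∈ [x−1, x] lie in a common compact set. Then lim_{y ↗ x} m(y) = m(x). -/

import Mathlib

/-!
The left limit `L` of the monotone map `m` at `x` exists and is at most `m x`. Passing to the limit
`y ↗ x` in `b w + K w y ≤ b (m y) + K (m y) y` shows, by joint continuity, that `L` maximizes
`b · + K · x`; since `m x` is the leftmost maximizer, `m x ≤ L`.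
-/

open Set Filter Topology Function

lemma MonotoneOn.exists_tendsto_nhdsLT_le {α β : Type*} [LinearOrder α] [TopologicalSpace α]
    [OrderTopology α] [ConditionallyCompleteLinearOrder β] [TopologicalSpace β] [OrderTopology β]
    {f : α → β} {a x : α} (hf : MonotoneOn f (Icc a x)) (ha : (Ioo a x).Nonempty) :
    ∃ L ≤ f x, Tendsto f (𝓝[<] x) (𝓝 L) := by
  have hax : a ≤ x := let ⟨_, hac, hcx⟩ := ha; (hac.trans hcx).le
  have hbdd : f '' Ioo a x ⊆ Iic (f x) := image_subset_iff.2 fun y hy =>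
    hf (Ioo_subset_Icc_self hy) (right_mem_Icc.2 hax) hy.2.le
  exact ⟨_, csSup_le (ha.image f) fun _ h => hbdd h,
    (hf.mono Ioo_subset_Icc_self).tendsto_nhdsWithin_Ioo_left ha ⟨f x, hbdd⟩⟩

lemma forall_le_of_tendsto_of_eventually_maximizer {ι α β γ : Type*} [TopologicalSpace α]
    [TopologicalSpace β] [LinearOrder γ] [TopologicalSpace γ] [OrderClosedTopology γ]
    {l : Filter ι} [l.NeBot] {F : α → β → γ} (hF : Continuous (uncurry F)) {u : ι → α}
    {v : ι → β} {a : α} {b : β} (hu : Tendsto u l (𝓝 a)) (hv : Tendsto v l (𝓝 b))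
    (hmax : ∀ᶠ i in l, ∀ w, F w (v i) ≤ F (u i) (v i)) (w : α) : F w b ≤ F a b :=
  le_of_tendsto_of_tendsto
    ((hF.tendsto (w, b)).comp (tendsto_const_nhds.prodMk_nhds hv))
    ((hF.tendsto (a, b)).comp (hu.prodMk_nhds hv)) (hmax.mono fun _ h => h w)

theorem stmt17_general (b : ℝ → ℝ) (K : ℝ → ℝ → ℝ) (hb : Continuous b)
    (hK : Continuous fun p : ℝ × ℝ => K p.1 p.2)
    (x : ℝ) (m : ℝ → ℝ)
    (hmax : ∀ y ∈ Set.Icc (x - 1) x,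
      (∀ z, b z + K z y ≤ b (m y) + K (m y) y) ∧
      ∀ z, (∀ w, b w + K w y ≤ b z + K z y) → m y ≤ z)
    (hmono : MonotoneOn m (Set.Icc (x - 1) x)) :
    Filter.Tendsto m (nhdsWithin x (Set.Iio x)) (nhds (m x)) := by
  obtain ⟨L, hLle, hL⟩ := hmono.exists_tendsto_nhdsLT_le (nonempty_Ioo.2 (by linarith))
  have hLmax : ∀ w, b w + K w x ≤ b L + K L x :=
    forall_le_of_tendsto_of_eventually_maximizer (F := fun w y => b w + K w y)
      ((hb.comp continuous_fst).add hK) hL (tendsto_id.mono_left nhdsWithin_le_nhds)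
      (eventually_of_mem (Ioo_mem_nhdsLT (by linarith : x - 1 < x)) fun y hy =>
        (hmax y (Ioo_subset_Icc_self hy)).1)
  rwa [le_antisymm hLle ((hmax x ⟨by linarith, le_rfl⟩).2 L hLmax)] at hL

/-- Left-continuity of leftmost maximizers in the target point. -/
theorem stmt17 (b : ℝ → ℝ) (K : ℝ → ℝ → ℝ) (hb : Continuous b)
    (hK : Continuous fun p : ℝ × ℝ => K p.1 p.2)
    (x : ℝ) (m : ℝ → ℝ)
    (hmax : ∀ y ∈ Set.Icc (x - 1) x,
      (∀ z, b z + K z y ≤ b (m y) + K (m y) y) ∧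
      ∀ z, (∀ w, b w + K w y ≤ b z + K z y) → m y ≤ z)
    (hmono : MonotoneOn m (Set.Icc (x - 1) x))
    (C : Set ℝ) (hC : IsCompact C)
    (hin : ∀ y ∈ Set.Icc (x - 1) x, ∀ z, (∀ w, b w + K w y ≤ b z + K z y) → z ∈ C) :
    Filter.Tendsto m (nhdsWithin x (Set.Iio x)) (nhds (m x)) :=
  stmt17_general b K hb hK x m hmax hmono
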